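/- For every x, y ∈ {o,b} and states s̄, t̄: s̄ ≈_{(x,y)} t̄ if and only if s̄ R t̄ for some symmetric relation R ⊆ S × S satisfying: whenever s R t and s →a s', either a = τ and s' R t, or there exist t1, t2, t' with t ⟹_{x,R,s} t1 →a t2 ⟹_{y,R,s'} t' and s' R t'. (That is, the definition of (x,y)-generic bisimilarity is unchanged if the intermediate states along the stuttering τ-paths in the transfer condition are additionally required to be related.) -/
import Mathlib


namespace GamesBisim

/-- Parameter values `o` (ordinary) and `b` (branching) for generic bisimulations. -/
inductive XY | o | b
deriving DecidableEq

/-- The faces ☹ (frown) and ☺ (smile). -/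
inductive Face | frown | smile
deriving DecidableEq

/-- Rewards: `*` (star) and `✓` (check). -/
inductive Rw | star | check
deriving DecidableEq

/-- A labelled transition system with states `S`, actions `A` containing a
distinguished silent action `tau`, and a transition relation. -/
structure LTS (S : Type u) (A : Type v) where
  tau : A
  Trans : S → A → S → Prop

namespace LTS

variable {S : Type u} {A : Type v}

/-- A single silent (τ) step. -/
def TauStep (L : LTS S A) (s s' : S) : Prop := L.Trans s L.tau s'

/-- `↠`: the reflexive-transitive closure of the τ-step relation. -/
def TauStar (L : LTS S A) : S → S → Prop := Relation.ReflTransGen L.TauStep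

/-- `↠⁺`: the transitive closure of the τ-step relation. -/
def TauPlus (L : LTS S A) : S → S → Prop := Relation.TransGen L.TauStep

/-- An LTS is non-divergent if it admits no infinite sequence of τ-steps. -/
def NonDivergent (L : LTS S A) : Prop :=
  ¬ ∃ f : ℕ → S, ∀ i, L.TauStep (f i) (f (i + 1))

/-- A symmetric relation `R` is a branching bisimulation. -/
def IsBranchingBisim (L : LTS S A) (R : S → S → Prop) : Prop :=
  (∀ s t, R s t → R t s) ∧
  ∀ s t a s', R s t → L.Trans s a s' →
    (a = L.tau ∧ R s' t) ∨
    ∃ t1 t', L.TauStar t t1 ∧ L.Trans t1 a t' ∧ R s t1 ∧ R s' t'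

/-- Branching bisimilarity `≈b`. -/
def BranchingBisimilar (L : LTS S A) (s t : S) : Prop :=
  ∃ R, L.IsBranchingBisim R ∧ R s t

/-- A symmetric relation `R` is a delay bisimulation. -/
def IsDelayBisim (L : LTS S A) (R : S → S → Prop) : Prop :=
  (∀ s t, R s t → R t s) ∧
  ∀ s t a s', R s t → L.Trans s a s' →
    (a = L.tau ∧ R s' t) ∨
    ∃ t1 t', L.TauStar t t1 ∧ L.Trans t1 a t' ∧ R s' t'

/-- The generalised weak transition `s ↠_{x,R,t} s'`: a weak transition `s ↠ s'`,
which in case `x = b` additionally satisfies `t R s` and `t R s'`. -/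
def GenTauStar (L : LTS S A) (x : XY) (R : S → S → Prop) (t : S) (s s' : S) : Prop :=
  L.TauStar s s' ∧ (x = XY.b → R t s ∧ R t s')

/-- The strong generalised weak transition `s ⟹_{x,R,t} s'`: a weak transition
`s ↠ s'`, which in case `x = b` is witnessed by a finite τ-path all of whose states
are related to `t` by `R`. -/
def SGenTauStar (L : LTS S A) (x : XY) (R : S → S → Prop) (t : S) (s s' : S) : Prop :=
  L.TauStar s s' ∧
  (x = XY.b → R t s ∧ Relation.ReflTransGen (fun u u' => L.TauStep u u' ∧ R t u') s s')

/-- A symmetric relation `R` is an `(x,y)`-generic bisimulation. -/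
def IsGenBisim (L : LTS S A) (x y : XY) (R : S → S → Prop) : Prop :=
  (∀ s t, R s t → R t s) ∧
  ∀ s t a s', R s t → L.Trans s a s' →
    (a = L.tau ∧ R s' t) ∨
    ∃ t1 t2 t', L.GenTauStar x R s t t1 ∧ L.Trans t1 a t2 ∧
      L.GenTauStar y R s' t2 t' ∧ R s' t'

/-- `(x,y)`-generic bisimilarity `≈_{(x,y)}`. -/
def GenBisimilar (L : LTS S A) (x y : XY) (s t : S) : Prop :=
  ∃ R, L.IsGenBisim x y R ∧ R s t

/-- A symmetric relation `R` is an `(x,y)`-generic bisimulation with explicit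
divergence (divergence condition D₄). -/
def IsGenBisimED (L : LTS S A) (x y : XY) (R : S → S → Prop) : Prop :=
  L.IsGenBisim x y R ∧
  ∀ s t, R s t → ∀ f : ℕ → S, f 0 = s → (∀ i, L.TauStep (f i) (f (i + 1))) →
    ∃ t' k, L.TauPlus t t' ∧ R (f k) t'

/-- `(x,y)`-generic bisimilarity with explicit divergence `≈ed_{(x,y)}`. -/
def GenBisimilarED (L : LTS S A) (x y : XY) (s t : S) : Prop :=
  ∃ R, L.IsGenBisimED x y R ∧ R s t

end LTS

/-- A relation `R` has the stuttering property: whenever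
`t₀ →τ t₁ →τ ⋯ →τ t_k` and `t₀ R t_k`, then `t_i R t_j` for all `0 ≤ i,j ≤ k`. -/
def StutteringProperty {S : Type u} {A : Type v} (L : LTS S A) (R : S → S → Prop) : Prop :=
  ∀ (k : ℕ) (t : ℕ → S),
    (∀ i < k, L.TauStep (t i) (t (i + 1))) → R (t 0) (t k) →
    ∀ i j, i ≤ k → j ≤ k → R (t i) (t j)

/-! ## Two-player games

A play is a maximal (finite or infinite) sequence of configurations connected by
moves, represented as `π : ℕ → Option C` which is `none` from the point (if any)
where the play has ended; a play may only end in a configuration whose owner is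
stuck. A strategy for a player is a (positional) function `σ : C → C` which is
required to pick a legal move at every configuration owned by that player admitting
at least one move; a play is consistent with `σ` if every move taken from a
configuration owned by that player follows `σ`. -/

section Games

variable {C : Type u}

/-- `π` is a maximal play of the game with move relation `move`. -/
def IsPlay (move : C → C → Prop) (π : ℕ → Option C) : Prop :=
  (∀ i c d, π i = some c → π (i + 1) = some d → move c d) ∧
  (∀ i c, π i = some c → π (i + 1) = none → ∀ d, ¬ move c d) ∧
  (∀ i, π i = none → π (i + 1) = none)

/-- The play `π` is consistent with strategy `σ` of the player owning the
configurations satisfying `owned`. -/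
def ConsistentWith (owned : C → Prop) (σ : C → C) (π : ℕ → Option C) : Prop :=
  ∀ i c d, π i = some c → owned c → π (i + 1) = some d → d = σ c

/-- `σ` is a valid strategy for the player owning the configurations satisfying
`owned`: it picks a legal move wherever a move exists. -/
def ValidStrategy (owned : C → Prop) (move : C → C → Prop) (σ : C → C) : Prop :=
  ∀ c, owned c → (∃ d, move c d) → move c (σ c)

/-- The play `π` is finite and ends in the configuration `c`. -/
def EndsAt (π : ℕ → Option C) (c : C) : Prop := ∃ i, π i = some c ∧ π (i + 1) = none

/-- The play `π` is infinite. -/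
def InfinitePlay (π : ℕ → Option C) : Prop := ∀ i, π i ≠ none

/-- The Büchi winning condition on infinite plays: the play passes through
infinitely many configurations carrying a `✓` reward. -/
def BuchiWin (reward : C → Prop) (π : ℕ → Option C) : Prop :=
  ∀ n, ∃ i, n ≤ i ∧ ∃ c, π i = some c ∧ reward c

/-- Duplicator wins the play `π`: either the play is finite and Spoiler is stuck,
or the play is infinite and satisfies the winning condition `infWin`. -/
def DupWinsPlay (dupOwned : C → Prop) (infWin : (ℕ → Option C) → Prop)
    (π : ℕ → Option C) : Prop :=
  (∃ c, EndsAt π c ∧ ¬ dupOwned c) ∨ (InfinitePlay π ∧ infWin π)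

/-- Spoiler wins the play `π` (all plays not won by Duplicator). -/
def SpWinsPlay (dupOwned : C → Prop) (infWin : (ℕ → Option C) → Prop)
    (π : ℕ → Option C) : Prop :=
  (∃ c, EndsAt π c ∧ dupOwned c) ∨ (InfinitePlay π ∧ ¬ infWin π)

/-- Duplicator wins the configuration `c`: she has a strategy winning all plays
starting in `c`. -/
def DupWins (dupOwned : C → Prop) (move : C → C → Prop)
    (infWin : (ℕ → Option C) → Prop) (c : C) : Prop :=
  ∃ σ : C → C, ValidStrategy dupOwned move σ ∧
    ∀ π, IsPlay move π → π 0 = some c → ConsistentWith dupOwned σ π →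
      DupWinsPlay dupOwned infWin π

/-- Spoiler wins the configuration `c`: he has a strategy winning all plays
starting in `c`. -/
def SpWins (dupOwned : C → Prop) (move : C → C → Prop)
    (infWin : (ℕ → Option C) → Prop) (c : C) : Prop :=
  ∃ σ : C → C, ValidStrategy (fun d => ¬ dupOwned d) move σ ∧
    ∀ π, IsPlay move π → π 0 = some c → ConsistentWith (fun d => ¬ dupOwned d) σ π →
      SpWinsPlay dupOwned infWin π

end Games

/-! ## The limited branching bisimulation (lbb) game -/

/-- Configurations of the lbb game: Spoiler-owned `⟨(s,t)⟩` and Duplicator-owned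
`⟨(s,t),(a,s')⟩`. -/
inductive LConf (S : Type u) (A : Type v)
  | sp (p : S × S)
  | dup (p : S × S) (c : A × S)

/-- Ownership in the lbb game. -/
def LConf.dupOwned {S : Type u} {A : Type v} : LConf S A → Prop
  | .sp _ => False
  | .dup _ _ => True

/-- Moves of the lbb game. -/
inductive LMove {S : Type u} {A : Type v} (L : LTS S A) : LConf S A → LConf S A → Prop
  | sp1 {s t a s'} (h : L.Trans s a s') :
      LMove L (LConf.sp (s, t)) (LConf.dup (s, t) (a, s'))
  | sp2 {s t a t'} (h : L.Trans t a t') :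
      LMove L (LConf.sp (s, t)) (LConf.dup (t, s) (a, t'))
  | dup1 {u v u'} :
      LMove L (LConf.dup (u, v) (L.tau, u')) (LConf.sp (u', v))
  | dup2 {u v a u' v'} (h : L.Trans v a v') :
      LMove L (LConf.dup (u, v) (a, u')) (LConf.sp (u', v'))
  | dup3 {u v a u' v'} (h : L.TauStep v v') :
      LMove L (LConf.dup (u, v) (a, u')) (LConf.sp (u, v'))

/-- `s ≡lb t`: Duplicator wins the lbb game from `⟨(s,t)⟩_S`; finite plays are won
by Duplicator iff Spoiler is stuck, and all infinite plays are won by Duplicator. -/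
def LTS.lbbEquiv {S : Type u} {A : Type v} (L : LTS S A) (s t : S) : Prop :=
  DupWins LConf.dupOwned (LMove L) (fun _ => True) (LConf.sp (s, t))

/-! ## The branching bisimulation (bb) game -/

/-- Configurations of the bb game: `⟨(s,t),c,r⟩` owned by Spoiler or Duplicator,
with challenge `c ∈ (A × S) ∪ {†}` (where `none` is `†`) and reward `r`. -/
inductive BConf (S : Type u) (A : Type v)
  | sp (p : S × S) (c : Option (A × S)) (r : Rw)
  | dup (p : S × S) (c : Option (A × S)) (r : Rw)

/-- Ownership in the bb game. -/
def BConf.dupOwned {S : Type u} {A : Type v} : BConf S A → Prop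
  | .sp _ _ _ => False
  | .dup _ _ _ => True

/-- The configuration carries a `✓` reward. -/
def BConf.reward {S : Type u} {A : Type v} : BConf S A → Prop
  | .sp _ _ r => r = Rw.check
  | .dup _ _ r => r = Rw.check

/-- Moves of the bb game. -/
inductive BMove {S : Type u} {A : Type v} (L : LTS S A) : BConf S A → BConf S A → Prop
  | sp1star {s t c r a s'} (h : L.Trans s a s') (hc : c = some (a, s') ∨ c = none) :
      BMove L (BConf.sp (s, t) c r) (BConf.dup (s, t) (some (a, s')) Rw.star)
  | sp1check {s t c r a s'} (h : L.Trans s a s')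
      (hc : ¬(c = some (a, s') ∨ c = none)) :
      BMove L (BConf.sp (s, t) c r) (BConf.dup (s, t) (some (a, s')) Rw.check)
  | sp2 {s t c r a t'} (h : L.Trans t a t') :
      BMove L (BConf.sp (s, t) c r) (BConf.dup (t, s) (some (a, t')) Rw.check)
  | dup1 {u v u' r} :
      BMove L (BConf.dup (u, v) (some (L.tau, u')) r) (BConf.sp (u', v) none Rw.check)
  | dup2 {u v a u' v' r} (h : L.Trans v a v') :
      BMove L (BConf.dup (u, v) (some (a, u')) r) (BConf.sp (u', v') none Rw.check)
  | dup3 {u v a u' v' r} (h : L.TauStep v v') :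
      BMove L (BConf.dup (u, v) (some (a, u')) r)
        (BConf.sp (u, v') (some (a, u')) Rw.star)

/-- `s ≡b t`: Duplicator wins the bb game from `⟨(s,t),†,*⟩_S`, where infinite
plays are won by Duplicator iff they yield infinitely many `✓` rewards. -/
def LTS.bbEquiv {S : Type u} {A : Type v} (L : LTS S A) (s t : S) : Prop :=
  DupWins BConf.dupOwned (BMove L) (BuchiWin BConf.reward) (BConf.sp (s, t) none Rw.star)

/-! ## The generic bisimulation (gb) game, and its explicit-divergence variant -/

/-- Configurations of the generic games: `⟨(s,t),c,m,r⟩` owned by Spoiler or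
Duplicator, with challenge `c ∈ (A × S) ∪ {†}`, partial match
`m ∈ (S × {☹,☺}) ∪ {†}` and reward `r`. -/
inductive GConf (S : Type u) (A : Type v)
  | sp (p : S × S) (c : Option (A × S)) (m : Option (S × Face)) (r : Rw)
  | dup (p : S × S) (c : Option (A × S)) (m : Option (S × Face)) (r : Rw)

/-- Ownership in the generic games. -/
def GConf.dupOwned {S : Type u} {A : Type v} : GConf S A → Prop
  | .sp _ _ _ _ => False
  | .dup _ _ _ _ => True

/-- The configuration carries a `✓` reward. -/
def GConf.reward {S : Type u} {A : Type v} : GConf S A → Prop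
  | .sp _ _ _ r => r = Rw.check
  | .dup _ _ _ r => r = Rw.check

/-- Moves of the `E`-generic bisimulation game. The parameter `rw1` is the reward
handed out by Duplicator's rule (1): `✓` in the gb game, `*` in the gbed game. -/
inductive GMove {S : Type u} {A : Type v} (L : LTS S A) (E : Set Face) (rw1 : Rw) :
    GConf S A → GConf S A → Prop
  | sp1 {s t c m r} (hc : c ≠ none) :
      GMove L E rw1 (GConf.sp (s, t) c m r) (GConf.dup (s, t) c m Rw.star)
  | sp2a {s t m r a s'} (h : L.Trans s a s') :
      GMove L E rw1 (GConf.sp (s, t) none m r)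
        (GConf.dup (s, t) (some (a, s')) (some (t, Face.frown)) Rw.star)
  | sp2b {s t c m r a s'} (h : L.Trans s a s') (hc : c ≠ some (a, s')) :
      GMove L E rw1 (GConf.sp (s, t) c m r)
        (GConf.dup (s, t) (some (a, s')) (some (t, Face.frown)) Rw.check)
  | sp3 {s t c m r a t'} (h : L.Trans t a t') :
      GMove L E rw1 (GConf.sp (s, t) c m r)
        (GConf.dup (t, s) (some (a, t')) (some (s, Face.frown)) Rw.check)
  | dup1 {u v u' vb f r} :
      GMove L E rw1 (GConf.dup (u, v) (some (L.tau, u')) (some (vb, f)) r)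
        (GConf.sp (u', vb) none none rw1)
  | dup2a {u v a u' vb v' r} (h : L.Trans vb a v') :
      GMove L E rw1 (GConf.dup (u, v) (some (a, u')) (some (vb, Face.frown)) r)
        (GConf.sp (u', v') (some (a, u')) (some (v', Face.smile)) Rw.star)
  | dup2b {u v a u' vb v' r} (h : L.Trans vb a v') :
      GMove L E rw1 (GConf.dup (u, v) (some (a, u')) (some (vb, Face.frown)) r)
        (GConf.sp (u', v') none none Rw.check)
  | dup2c {u v a u' vb v' r} (h : L.Trans vb a v') (hE : Face.smile ∈ E) :
      GMove L E rw1 (GConf.dup (u, v) (some (a, u')) (some (vb, Face.frown)) r)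
        (GConf.sp (u, v) (some (a, u')) (some (v', Face.smile)) Rw.star)
  | dup3a {u v a u' vb f v' r} (h : L.TauStep vb v') :
      GMove L E rw1 (GConf.dup (u, v) (some (a, u')) (some (vb, f)) r)
        (GConf.sp (u, v') (some (a, u')) (some (v', f)) Rw.star)
  | dup3b {u v a u' vb v' r} (h : L.TauStep vb v') :
      GMove L E rw1 (GConf.dup (u, v) (some (a, u')) (some (vb, Face.smile)) r)
        (GConf.sp (u', v') none none Rw.check)
  | dup3c {u v a u' vb f v' r} (h : L.TauStep vb v') (hE : f ∈ E) :
      GMove L E rw1 (GConf.dup (u, v) (some (a, u')) (some (vb, f)) r)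
        (GConf.sp (u, v) (some (a, u')) (some (v', f)) Rw.star)

/-- `E(x,y) ⊆ {☹,☺}`: the smallest set containing `☹` when `x = o` and `☺` when
`y = o`. -/
def Exy (x y : XY) : Set Face :=
  {f | (f = Face.frown ∧ x = XY.o) ∨ (f = Face.smile ∧ y = XY.o)}

/-- `s ≡_E t`: Duplicator wins the `E`-generic bisimulation game from
`⟨(s,t),†,†,*⟩_S`; infinite plays are won by Duplicator iff they yield infinitely
many `✓` rewards. -/
def LTS.gbEquiv {S : Type u} {A : Type v} (L : LTS S A) (E : Set Face) (s t : S) : Prop :=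
  DupWins GConf.dupOwned (GMove L E Rw.check) (BuchiWin GConf.reward)
    (GConf.sp (s, t) none none Rw.star)

/-- `s ≡ed_E t`: Duplicator wins the `E`-generic bisimulation with explicit
divergence game from `⟨(s,t),†,†,*⟩_S`. -/
def LTS.gbedEquiv {S : Type u} {A : Type v} (L : LTS S A) (E : Set Face) (s t : S) : Prop :=
  DupWins GConf.dupOwned (GMove L E Rw.star) (BuchiWin GConf.reward)
    (GConf.sp (s, t) none none Rw.star)

/-- The abstraction function `f(⟨(s,t),c,m,r⟩) = ⟨(s,t),c,r⟩` from configurations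
of the generic game to configurations of the bb game, preserving ownership. -/
def fabs {S : Type u} {A : Type v} : GConf S A → BConf S A
  | .sp p c _ r => .sp p c r
  | .dup p c _ r => .dup p c r


section StmtSevenAux

variable {S : Type u} {A : Type v}

/-- Semi-generic bisimulation: like a generic bisimulation but with a relaxed
idle clause (à la semi-branching bisimulation). -/
def Semi (L : LTS S A) (x y : XY) (R : S → S → Prop) : Prop :=
  (∀ s t, R s t → R t s) ∧
  ∀ s t a s', R s t → L.Trans s a s' →
    (a = L.tau ∧ ∃ t0, L.TauStar t t0 ∧ R s t0 ∧ R s' t0) ∨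
    ∃ t1 t2 t', L.TauStar t t1 ∧ (x = XY.b → R s t1) ∧ L.Trans t1 a t2 ∧
      L.TauStar t2 t' ∧ (y = XY.b → R s' t2 ∧ R s' t') ∧ R s' t'

/-- Semi-generic bisimilarity. -/
def Sb (L : LTS S A) (x y : XY) (s t : S) : Prop := ∃ R, Semi L x y R ∧ R s t

theorem no_ob {C : Prop} (h : XY.o = XY.b) : C := nomatch h

theorem semi_of_gen {L : LTS S A} {x y : XY} {R} (h : L.IsGenBisim x y R) :
    Semi L x y R := by
  obtain ⟨hsym, htr⟩ := h
  refine ⟨hsym, fun s t a s' hR hT => ?_⟩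
  rcases htr s t a s' hR hT with ⟨ha, h1⟩ | ⟨t1, t2, t', ⟨h1, h2⟩, h3, ⟨h4, h5⟩, h6⟩
  · exact Or.inl ⟨ha, t, Relation.ReflTransGen.refl, hR, h1⟩
  · exact Or.inr ⟨t1, t2, t', h1, fun hx => (h2 hx).2, h3, h4, fun hy => h5 hy, h6⟩

theorem semi_Sb (L : LTS S A) (x y : XY) : Semi L x y (Sb L x y) := by
  constructor
  · rintro s t ⟨R, hR, h⟩; exact ⟨R, hR, hR.1 _ _ h⟩
  · rintro s t a s' ⟨R, hR, h⟩ hT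
    rcases hR.2 s t a s' h hT with ⟨ha, t0, h1, h2, h3⟩ | ⟨t1, t2, t', h1, h2, h3, h4, h5, h6⟩
    · exact Or.inl ⟨ha, t0, h1, ⟨R, hR, h2⟩, ⟨R, hR, h3⟩⟩
    · exact Or.inr ⟨t1, t2, t', h1, fun hx => ⟨R, hR, h2 hx⟩, h3, h4,
        fun hy => ⟨⟨R, hR, (h5 hy).1⟩, ⟨R, hR, (h5 hy).2⟩⟩, ⟨R, hR, h6⟩⟩

theorem Sb_symm {L : LTS S A} {x y : XY} {s t : S} (h : Sb L x y s t) : Sb L x y t s :=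
  (semi_Sb L x y).1 s t h

/-- Weak simulation of τ-paths. -/
theorem L1 {L : LTS S A} {x y : XY} {s t s' : S} (h : Sb L x y s t)
    (hs : L.TauStar s s') : ∃ t', L.TauStar t t' ∧ Sb L x y s' t' := by
  induction hs with
  | refl => exact ⟨t, Relation.ReflTransGen.refl, h⟩
  | tail hab hbc ih =>
    obtain ⟨t', ht', hSb⟩ := ih
    rcases (semi_Sb L x y).2 _ _ L.tau _ hSb hbc with
      ⟨_, t0, h1, _, h3⟩ | ⟨t1, t2, t'', h1, _, h3, h4, _, h6⟩
    · exact ⟨t0, ht'.trans h1, h3⟩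
    · exact ⟨t'', (ht'.trans h1).trans ((Relation.ReflTransGen.single h3).trans h4), h6⟩

theorem Sb_trans {L : LTS S A} {x y : XY} {s u t : S}
    (h1 : Sb L x y s u) (h2 : Sb L x y u t) : Sb L x y s t := by
  refine ⟨fun a b => ∃ c, Sb L x y a c ∧ Sb L x y c b, ⟨?_, ?_⟩, u, h1, h2⟩
  · rintro a b ⟨c, hac, hcb⟩; exact ⟨c, Sb_symm hcb, Sb_symm hac⟩
  rintro s t a s' ⟨u, hsu, hut⟩ hT
  rcases (semi_Sb L x y).2 s u a s' hsu hT with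
    ⟨ha, u0, hu0, hsu0, hs'u0⟩ | ⟨u1, u2, u', hu1, hxs, htr12, hu2u', hy', hs'u'⟩
  · -- idle case
    obtain ⟨t0, ht0, hu0t0⟩ := L1 hut hu0
    exact Or.inl ⟨ha, t0, ht0, ⟨u0, hsu0, hu0t0⟩, ⟨u0, hs'u0, hu0t0⟩⟩
  · -- move case
    obtain ⟨tbar, htbar, hu1tb⟩ := L1 hut hu1
    rcases (semi_Sb L x y).2 u1 tbar a u2 hu1tb htr12 with
      ⟨ha, t0, htbt0, hu1t0, hu2t0⟩ | ⟨T1, T2, T3, hT1, hxT1, hT12, hT23, hyT, hu2T3⟩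
    · -- inner idle (a = τ)
      subst ha
      obtain ⟨t1s, ht01, hu't1⟩ := L1 hu2t0 hu2u'
      have hsT : ∃ c, Sb L x y s c ∧ Sb L x y c t := ⟨u, hsu, hut⟩
      have hs'T1s : ∃ c, Sb L x y s' c ∧ Sb L x y c t1s := ⟨u', hs'u', hu't1⟩
      cases x with
      | b =>
        have hsTtb : ∃ c, Sb L XY.b y s c ∧ Sb L XY.b y c tbar := ⟨u1, hxs rfl, hu1tb⟩
        have hsTt0 : ∃ c, Sb L XY.b y s c ∧ Sb L XY.b y c t0 := ⟨u1, hxs rfl, hu1t0⟩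
        cases y with
        | b =>
          exact Or.inl ⟨rfl, t0, htbar.trans htbt0, hsTt0, ⟨u2, (hy' rfl).1, hu2t0⟩⟩
        | o =>
          rcases ht01.cases_head with heq | ⟨w, hw, hwt1⟩
          · subst heq
            rcases htbt0.cases_head with heq2 | ⟨w, hw, hwt0⟩
            · subst heq2
              rcases htbar.cases_head with heq3 | ⟨w, hw, hwtb⟩
              · subst heq3
                exact Or.inl ⟨rfl, t, Relation.ReflTransGen.refl, hsT, hs'T1s⟩
              · exact Or.inr ⟨t, w, tbar, Relation.ReflTransGen.refl, fun _ => hsT, hw,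
                  hwtb, fun hyy => no_ob hyy, hs'T1s⟩
            · exact Or.inr ⟨tbar, w, t0, htbar, fun _ => hsTtb, hw, hwt0,
                fun hyy => no_ob hyy, hs'T1s⟩
          · exact Or.inr ⟨t0, w, t1s, htbar.trans htbt0, fun _ => hsTt0, hw, hwt1,
              fun hyy => no_ob hyy, hs'T1s⟩
      | o =>
        cases y with
        | b =>
          have hs'Tt0 : ∃ c, Sb L XY.o XY.b s' c ∧ Sb L XY.o XY.b c t0 :=
            ⟨u2, (hy' rfl).1, hu2t0⟩
          rcases ht01.cases_tail with heq | ⟨c, hc, hcb⟩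
          · subst heq
            rcases ((htbar.trans htbt0).cases_tail) with heq2 | ⟨c, hc, hcb⟩
            · subst heq2
              exact Or.inl ⟨rfl, t1s, Relation.ReflTransGen.refl, hsT, hs'Tt0⟩
            · exact Or.inr ⟨c, t1s, t1s, hc, fun hxx => no_ob hxx, hcb,
                Relation.ReflTransGen.refl, fun _ => ⟨hs'Tt0, hs'Tt0⟩, hs'Tt0⟩
          · exact Or.inr ⟨c, t1s, t1s, (htbar.trans htbt0).trans hc,
              fun hxx => no_ob hxx, hcb, Relation.ReflTransGen.refl,
              fun _ => ⟨hs'T1s, hs'T1s⟩, hs'T1s⟩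
        | o =>
          rcases (((htbar.trans htbt0).trans ht01).cases_head) with heq | ⟨w, hw, hwt1⟩
          · exact Or.inl ⟨rfl, t1s, (htbar.trans htbt0).trans ht01, heq ▸ hsT, hs'T1s⟩
          · exact Or.inr ⟨t, w, t1s, Relation.ReflTransGen.refl,
              fun hxx => no_ob hxx, hw, hwt1, fun hyy => no_ob hyy, hs'T1s⟩
    · -- inner move
      obtain ⟨T4, hT34, hu'T4⟩ := L1 hu2T3 hu2u'
      exact Or.inr ⟨T1, T2, T4, htbar.trans hT1,
        fun hx => ⟨u1, hxs hx, hxT1 hx⟩, hT12, hT23.trans hT34,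
        fun hy => ⟨⟨u2, (hy' hy).1, (hyT hy).1⟩, ⟨u', hs'u', hu'T4⟩⟩,
        ⟨u', hs'u', hu'T4⟩⟩

/-- The stuttering lemma for semi-generic bisimilarity. -/
theorem stutter {L : LTS S A} {x y : XY} {z p m q : S} (hzp : Sb L x y z p)
    (hpm : L.TauStar p m) (hmq : L.TauStar m q) (hzq : Sb L x y z q) :
    Sb L x y z m := by
  refine ⟨fun a b => Sb L x y a b ∨
      (∃ p' q', Sb L x y a p' ∧ L.TauStar p' b ∧ L.TauStar b q' ∧ Sb L x y a q') ∨
      (∃ p' q', Sb L x y b p' ∧ L.TauStar p' a ∧ L.TauStar a q' ∧ Sb L x y b q'),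
    ⟨?_, ?_⟩, Or.inr (Or.inl ⟨p, q, hzp, hpm, hmq, hzq⟩)⟩
  · rintro a b (h | ⟨p', q', h1, h2, h3, h4⟩ | ⟨p', q', h1, h2, h3, h4⟩)
    · exact Or.inl (Sb_symm h)
    · exact Or.inr (Or.inr ⟨p', q', h1, h2, h3, h4⟩)
    · exact Or.inr (Or.inl ⟨p', q', h1, h2, h3, h4⟩)
  rintro s t a s' (h | ⟨p', q', hsp', hp't, htq', hsq'⟩ | ⟨p', q', htp', hp's, hsq', htq'⟩) hT
  · -- plain Sb pair
    rcases (semi_Sb L x y).2 s t a s' h hT with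
      ⟨ha, t0, h1, h2, h3⟩ | ⟨t1, t2, t', h1, h2, h3, h4, h5, h6⟩
    · exact Or.inl ⟨ha, t0, h1, Or.inl h2, Or.inl h3⟩
    · exact Or.inr ⟨t1, t2, t', h1, fun hx => Or.inl (h2 hx), h3, h4,
        fun hy => ⟨Or.inl (h5 hy).1, Or.inl (h5 hy).2⟩, Or.inl h6⟩
  · -- s solid, t on path
    rcases (semi_Sb L x y).2 s q' a s' hsq' hT with
      ⟨ha, q0, h1, h2, h3⟩ | ⟨t1, t2, t', h1, h2, h3, h4, h5, h6⟩
    · exact Or.inl ⟨ha, q0, htq'.trans h1, Or.inl h2, Or.inl h3⟩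
    · exact Or.inr ⟨t1, t2, t', htq'.trans h1, fun hx => Or.inl (h2 hx), h3, h4,
        fun hy => ⟨Or.inl (h5 hy).1, Or.inl (h5 hy).2⟩, Or.inl h6⟩
  · -- s on path, t solid
    obtain ⟨t1', htt1, hst1⟩ := L1 (Sb_symm htp') hp's
    rcases (semi_Sb L x y).2 s t1' a s' hst1 hT with
      ⟨ha, w, h1, h2, h3⟩ | ⟨t1, t2, t', h1, h2, h3, h4, h5, h6⟩
    · exact Or.inl ⟨ha, w, htt1.trans h1, Or.inl h2, Or.inl h3⟩
    · exact Or.inr ⟨t1, t2, t', htt1.trans h1, fun hx => Or.inl (h2 hx), h3, h4,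
        fun hy => ⟨Or.inl (h5 hy).1, Or.inl (h5 hy).2⟩, Or.inl h6⟩

theorem annot {L : LTS S A} {t t1 : S} (h : L.TauStar t t1) (Q : S → Prop)
    (hQ : ∀ w, L.TauStar t w → L.TauStar w t1 → Q w) :
    Relation.ReflTransGen (fun u u' => L.TauStep u u' ∧ Q u') t t1 := by
  have key : ∀ c, L.TauStar c t1 → L.TauStar t c →
      Relation.ReflTransGen (fun u u' => L.TauStep u u' ∧ Q u') c t1 := by
    intro c hc
    induction hc using Relation.ReflTransGen.head_induction_on with
    | refl => intro _; exact Relation.ReflTransGen.refl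
    | @head a' c' hstep hrest ih =>
      intro hta
      have htc : L.TauStar t c' := hta.tail hstep
      exact Relation.ReflTransGen.head ⟨hstep, hQ c' htc hrest⟩ (ih htc)
  exact key t h Relation.ReflTransGen.refl

theorem last_of {P : S → Prop} {r : S → S → Prop} {a b : S}
    (h : Relation.ReflTransGen (fun u u' => r u u' ∧ P u') a b) (ha : P a) : P b := by
  induction h with
  | refl => exact ha
  | tail _ hst _ => exact hst.2

end StmtSevenAux


/-- `(x,y)`-generic bisimilarity is unchanged if the intermediate
states along the stuttering τ-paths in the transfer condition are additionally
required to be related (i.e. using `⟹_{x,R,s}` in place of `↠_{x,R,s}`). -/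
theorem genBisimilar_iff_strong_transfer {S : Type u} {A : Type v} (L : LTS S A)
    (x y : XY) (sb tb : S) :
    L.GenBisimilar x y sb tb ↔
      ∃ R : S → S → Prop,
        (∀ s t, R s t → R t s) ∧
        (∀ s t a s', R s t → L.Trans s a s' →
          (a = L.tau ∧ R s' t) ∨
          ∃ t1 t2 t', L.SGenTauStar x R s t t1 ∧ L.Trans t1 a t2 ∧
            L.SGenTauStar y R s' t2 t' ∧ R s' t') ∧
        R sb tb := by
  constructor
  · rintro ⟨R, hR, hst⟩
    refine ⟨Sb L x y, fun s t h => Sb_symm h, ?_, ⟨R, semi_of_gen hR, hst⟩⟩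
    intro s t a s' hRst hT
    rcases (semi_Sb L x y).2 s t a s' hRst hT with
      ⟨ha, t0, ht0, h1, h2⟩ | ⟨t1, t2, t', h1, h2, h3, h4, h5, h6⟩
    · exact Or.inl ⟨ha, Sb_trans (Sb_trans h2 (Sb_symm h1)) hRst⟩
    · refine Or.inr ⟨t1, t2, t',
        ⟨h1, fun hx => ⟨hRst, annot h1 _
          (fun w hw1 hw2 => stutter hRst hw1 hw2 (h2 hx))⟩⟩, h3,
        ⟨h4, fun hy => ⟨(h5 hy).1, annot h4 _
          (fun w hw1 hw2 => stutter (h5 hy).1 hw1 hw2 (h5 hy).2)⟩⟩, h6⟩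
  · rintro ⟨R, hsym, htr, hst⟩
    refine ⟨R, ⟨hsym, fun s t a s' hR hT => ?_⟩, hst⟩
    rcases htr s t a s' hR hT with h | ⟨t1, t2, t', ⟨g1, g2⟩, g3, ⟨g4, g5⟩, g6⟩
    · exact Or.inl h
    · exact Or.inr ⟨t1, t2, t',
        ⟨g1, fun hx => ⟨(g2 hx).1, last_of (g2 hx).2 (g2 hx).1⟩⟩, g3,
        ⟨g4, fun hy => ⟨(g5 hy).1, last_of (g5 hy).2 (g5 hy).1⟩⟩, g6⟩


end GamesBisim
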